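/- arXiv:1603.09196 — 7 statements merged into one kernel-verified Lean document; each statement's English description precedes it below -/
import Mathlib

section
/- Let K be a field and let O₂ ⊊ O₁ be two valuation subrings of K, with maximal ideals M₁ and M₂ respectively. Let A be an ideal of O₂ whose radical equals M₂. Then M₁ is strictly contained in A. -/
/-!
If `O₂ < O₁`, any `y ∈ O₁ \ O₂` gives `a = y⁻¹`, a nonunit of `O₂` that is a unit of `O₁`;
some power `aⁿ` lies in `A` since `√A = M₂`, and it is still a unit of `O₁`. Dividing an
element of `M₁` by this unit keeps it in `M₁ ⊆ M₂ ⊆ O₂`, so `M₁ ⊆ aⁿ O₂ ⊆ A`, while `aⁿ ∉ M₁`.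
-/

namespace ValuationSubring

variable {K : Type*} [Field K] {O₁ O₂ : ValuationSubring K}

theorem exists_mem_nonunits_valuation_eq_one_of_lt (h : O₂ < O₁) :
    ∃ a ∈ O₂.nonunits, O₁.valuation a = 1 := by
  obtain ⟨hle, y, hy₁, hy₂⟩ := SetLike.lt_iff_le_and_exists.mp h
  have hy₀ : y ≠ 0 := by rintro rfl; exact hy₂ O₂.zero_mem
  have hy_inv : y⁻¹ ∈ O₁ := hle ((O₂.mem_or_inv_mem y).resolve_left hy₂)
  refine ⟨y⁻¹, O₂.inv_mem_nonunits_iff.mpr (Or.inr hy₂), le_antisymm ?_ ?_⟩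
  · exact (O₁.valuation_le_one_iff _).mpr hy_inv
  · have hv : O₁.valuation y ≤ 1 := (O₁.valuation_le_one_iff _).mpr hy₁
    rw [map_inv₀]
    exact one_le_inv₀ ((Valuation.pos_iff _).mpr hy₀) |>.mpr hv

theorem nonunits_subset_image_ideal (hle : O₂ ≤ O₁) {A : Ideal O₂} {z : O₂} (hzA : z ∈ A)
    (hz : O₁.valuation z = 1) : (O₁.nonunits : Set K) ⊆ Subtype.val '' (A : Set O₂) := by
  intro x hx
  have hz₀ : (z : K) ≠ 0 := fun h0 => by simp [h0] at hz
  have hq : x / z ∈ O₂ := by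
    refine nonunits_subset (nonunits_le_nonunits.mpr hle ?_)
    rw [O₁.mem_nonunits_iff, map_div₀, hz, div_one]
    exact O₁.mem_nonunits_iff.mp hx
  refine ⟨z * ⟨x / z, hq⟩, A.mul_mem_right _ hzA, ?_⟩
  simp only [MulMemClass.coe_mul]
  field_simp

end ValuationSubring

open ValuationSubring in
theorem maximalIdeal_lt_ideal_of_radical_eq
    {K : Type*} [Field K] (O₁ O₂ : ValuationSubring K) (h : O₂ < O₁)
    (A : Ideal O₂) (hA : A.radical = IsLocalRing.maximalIdeal O₂) :
    (Subtype.val '' ((IsLocalRing.maximalIdeal O₁ : Ideal O₁) : Set O₁) : Set K)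
      ⊂ (Subtype.val '' ((A : Ideal O₂) : Set O₂) : Set K) := by
  obtain ⟨a, ha₂, ha₁⟩ := exists_mem_nonunits_valuation_eq_one_of_lt h
  obtain ⟨ha, haM⟩ := mem_nonunits_iff_exists_mem_maximalIdeal.mp ha₂
  rw [← hA] at haM
  obtain ⟨n, hnA⟩ := haM
  have hv : O₁.valuation ((⟨a, ha⟩ ^ n : O₂) : K) = 1 := by simp [ha₁]
  rw [image_maximalIdeal]
  refine Set.ssubset_iff_subset_ne.mpr ⟨nonunits_subset_image_ideal h.le hnA hv, ?_⟩
  intro heq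
  have : ((⟨a, ha⟩ ^ n : O₂) : K) ∈ (O₁.nonunits : Set K) := heq ▸ ⟨_, hnA, rfl⟩
  exact (O₁.mem_nonunits_iff.mp this).ne hv
end

section
/- Let K be a field and let O₁ and O₂ be two independent valuation subrings of K, meaning that O₁ ≠ K, O₂ ≠ K, and the only valuation subring of K containing both O₁ and O₂ is K itself. Let A₁ be a nonzero proper ideal of O₁ and A₂ a nonzero proper ideal of O₂. Then K = A₁ + A₂ (every element of K is a sum of an element of A₁ and an element of A₂) and K^× = (1 + A₁)·(1 + A₂) (every nonzero element of K is a product of an element of 1 + A₁ and an element of 1 + A₂). -/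
/-!
Independence means that the set `O₁ O₂` of products is all of `K`: it is a multiplicative monoid
containing `O₁`, and such a monoid is additively closed, since up to swapping `x` and `y` we have
`x + y = x (1 + y / x)` with `y / x ∈ O₁`.

Given nonzero `bᵢ ∈ Aᵢ`, factoring `(b₁ b₂)⁻¹ = s t` gives `z ∈ A₁` and `w ∈ A₂` with `z w = 1`,
from which `1 ∈ A₁ + A₂` follows by a short case analysis; scaling gives `K = A₁ + A₂`. This uses
only that the `Aᵢ` are nonzero `Oᵢ`-submodules of `K`, so it also applies to `x A₂`: writing
`x - 1 = a + x d` gives `x (1 - d) = 1 + a`, and `(1 - d)⁻¹ ∈ 1 + A₂` because `1 - d` is a unit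
of `O₂`.
-/

theorem Submodule.comap_mulLeft_ne_bot {R K : Type*} [CommRing R] [Field K] [Algebra R K]
    (J : Submodule R K) (hJ : J ≠ ⊥) {x : K} (hx : x ≠ 0) :
    J.comap (LinearMap.mulLeft R x) ≠ ⊥ := by
  obtain ⟨b, hb, hb0⟩ := Submodule.exists_mem_ne_zero_of_ne_bot hJ
  refine (Submodule.ne_bot_iff _).2 ⟨x⁻¹ * b, ?_, mul_ne_zero (inv_ne_zero hx) hb0⟩
  simpa [mul_inv_cancel_left₀ hx] using hb

namespace ValuationSubring

variable {K : Type*} [Field K]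

def Independent (O₁ O₂ : ValuationSubring K) : Prop :=
  ∀ O : ValuationSubring K, O₁ ≤ O → O₂ ≤ O → (O : Set K) = Set.univ

theorem add_mem_of_toSubmonoid_le {O : ValuationSubring K} {M : Submonoid K}
    (hOM : O.toSubmonoid ≤ M) {x y : K} (hx : x ∈ M) (hy : y ∈ M) : x + y ∈ M := by
  wlog hyx : y / x ∈ O generalizing x y
  · rw [add_comm]
    refine this hy hx ?_
    simpa using (O.mem_or_inv_mem (y / x)).resolve_left hyx
  rcases eq_or_ne x 0 with rfl | hx0
  · simpa using hy
  have hsum : x + y = x * (1 + y / x) := by field_simp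
  rw [hsum]
  exact M.mul_mem hx (hOM (O.add_mem _ _ O.one_mem hyx))

def ofSubmonoid (O : ValuationSubring K) (M : Submonoid K) (hOM : O.toSubmonoid ≤ M) :
    ValuationSubring K where
  toSubmonoid := M
  add_mem' := add_mem_of_toSubmonoid_le hOM
  zero_mem' := hOM O.zero_mem
  neg_mem' {x} hx := by simpa using M.mul_mem (hOM (O.neg_mem _ O.one_mem)) hx
  mem_or_inv_mem' x := (O.mem_or_inv_mem x).imp (@hOM x) (@hOM x⁻¹)

theorem mul_mem_submodule {O : ValuationSubring K} (J : Submodule O K) {r x : K} (hr : r ∈ O)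
    (hx : x ∈ J) : r * x ∈ J :=
  J.smul_mem ⟨r, hr⟩ hx

variable {O₁ O₂ : ValuationSubring K}

theorem Independent.exists_mul_eq (h : O₁.Independent O₂) (x : K) :
    ∃ s ∈ O₁, ∃ t ∈ O₂, s * t = x := by
  let M := O₁.toSubmonoid ⊔ O₂.toSubmonoid
  have hM : ((O₁.ofSubmonoid M le_sup_left : ValuationSubring K) : Set K) = Set.univ :=
    h _ (fun _ hy => le_sup_left (a := O₁.toSubmonoid) hy)
      (fun _ hy => le_sup_right (b := O₂.toSubmonoid) hy)
  exact Submonoid.mem_sup.1 (Set.eq_univ_iff_forall.1 hM x)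

theorem Independent.exists_mul_eq_one (h : O₁.Independent O₂) {J₁ : Submodule O₁ K}
    {J₂ : Submodule O₂ K} (hJ₁ : J₁ ≠ ⊥) (hJ₂ : J₂ ≠ ⊥) : ∃ z ∈ J₁, ∃ w ∈ J₂, z * w = 1 := by
  obtain ⟨b₁, hb₁, hb₁0⟩ := Submodule.exists_mem_ne_zero_of_ne_bot hJ₁
  obtain ⟨b₂, hb₂, hb₂0⟩ := Submodule.exists_mem_ne_zero_of_ne_bot hJ₂
  obtain ⟨s, hs, t, ht, hst⟩ := h.exists_mul_eq (b₁ * b₂)⁻¹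
  refine ⟨s * b₁, mul_mem_submodule J₁ hs hb₁, t * b₂, mul_mem_submodule J₂ ht hb₂, ?_⟩
  calc s * b₁ * (t * b₂) = s * t * (b₁ * b₂) := by ring
    _ = 1 := by rw [hst, inv_mul_cancel₀ (mul_ne_zero hb₁0 hb₂0)]

theorem one_add_notMem {O : ValuationSubring K} {w : K} (hw : w ∉ O) : 1 + w ∉ O :=
  fun h => hw (by simpa using sub_mem h O.one_mem)

theorem Independent.exists_add_eq_one (h : O₁.Independent O₂) {J₁ : Submodule O₁ K}
    {J₂ : Submodule O₂ K} (hJ₁ : J₁ ≠ ⊥) (hJ₂ : J₂ ≠ ⊥) : ∃ a ∈ J₁, ∃ b ∈ J₂, a + b = 1 := by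
  obtain ⟨z, hz, w, hw, hzw⟩ := h.exists_mul_eq_one hJ₁ hJ₂
  by_cases hw₁ : w ∈ O₁
  · refine ⟨1, ?_, 0, J₂.zero_mem, add_zero 1⟩
    simpa [hzw, mul_comm] using mul_mem_submodule J₁ hw₁ hz
  by_cases hz₂ : z ∈ O₂
  · refine ⟨0, J₁.zero_mem, 1, ?_, zero_add 1⟩
    simpa [hzw] using mul_mem_submodule J₂ hz₂ hw
  have hp := one_add_notMem hw₁
  have hq := one_add_notMem hz₂
  have hp₀ : 1 + w ≠ 0 := fun h0 => hp (h0 ▸ O₁.zero_mem)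
  have hq₀ : 1 + z ≠ 0 := fun h0 => hq (h0 ▸ O₂.zero_mem)
  have hu₁ : 1 - (1 + w)⁻¹ ∈ O₁ := sub_mem O₁.one_mem ((O₁.mem_or_inv_mem _).resolve_left hp)
  have hu₂ : 1 - (1 + z)⁻¹ ∈ O₂ := sub_mem O₂.one_mem ((O₂.mem_or_inv_mem _).resolve_left hq)
  refine ⟨(1 - (1 + w)⁻¹) * z, mul_mem_submodule J₁ hu₁ hz,
    (1 - (1 + z)⁻¹) * w, mul_mem_submodule J₂ hu₂ hw, ?_⟩
  field_simp
  linear_combination (1 + z + w) * hzw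

theorem Independent.exists_add_eq (h : O₁.Independent O₂) {J₁ : Submodule O₁ K}
    {J₂ : Submodule O₂ K} (hJ₁ : J₁ ≠ ⊥) (hJ₂ : J₂ ≠ ⊥) (x : K) :
    ∃ a ∈ J₁, ∃ b ∈ J₂, a + b = x := by
  rcases eq_or_ne x 0 with rfl | hx
  · exact ⟨0, J₁.zero_mem, 0, J₂.zero_mem, add_zero 0⟩
  obtain ⟨a, ha, b, hb, hab⟩ :=
    h.exists_add_eq_one (J₁.comap_mulLeft_ne_bot hJ₁ hx) (J₂.comap_mulLeft_ne_bot hJ₂ hx)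
  refine ⟨x * a, ha, x * b, hb, ?_⟩
  rw [← mul_add, hab, mul_one]

theorem map_ideal_ne_bot {O : ValuationSubring K} {A : Ideal O} (hA : A ≠ ⊥) :
    Submodule.map (Algebra.linearMap O K) A ≠ ⊥ := by
  rw [Ne, ← Submodule.map_bot (Algebra.linearMap O K)]
  exact (Submodule.map_injective_of_injective Subtype.val_injective).ne hA

end ValuationSubring

theorem IsLocalRing.exists_one_add_mul_one_sub_eq_one {R : Type*} [CommRing R] [IsLocalRing R]
    {A : Ideal R} (hA : A ≠ ⊤) {d : R} (hd : d ∈ A) : ∃ b ∈ A, (1 + b) * (1 - d) = 1 := by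
  obtain ⟨u, hu⟩ := isUnit_one_sub_self_of_mem_nonunits d (le_maximalIdeal hA hd)
  refine ⟨d * ↑u⁻¹, A.mul_mem_right _ hd, ?_⟩
  calc (1 + d * ↑u⁻¹) * (1 - d) = 1 - d + d * (↑u⁻¹ * ↑u) := by rw [← hu]; ring
    _ = 1 := by rw [Units.inv_mul]; ring

theorem independent_valuations_ideal_sum_and_prod_general
    {K : Type*} [Field K] (O₁ O₂ : ValuationSubring K)
    (hindep : ∀ O : ValuationSubring K, O₁ ≤ O → O₂ ≤ O → (O : Set K) = Set.univ)
    (A₁ : Ideal O₁) (hA₁0 : A₁ ≠ ⊥)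
    (A₂ : Ideal O₂) (hA₂0 : A₂ ≠ ⊥) (hA₂1 : A₂ ≠ ⊤) :
    (∀ x : K, ∃ a ∈ A₁, ∃ b ∈ A₂, x = (a : K) + (b : K)) ∧
    (∀ x : K, x ≠ 0 → ∃ a ∈ A₁, ∃ b ∈ A₂, x = (1 + (a : K)) * (1 + (b : K))) := by
  have h : O₁.Independent O₂ := hindep
  have hJ₁ := ValuationSubring.map_ideal_ne_bot hA₁0
  have hJ₂ := ValuationSubring.map_ideal_ne_bot hA₂0
  refine ⟨fun x => ?_, fun x hx => ?_⟩
  · obtain ⟨_, ⟨a, ha, rfl⟩, _, ⟨b, hb, rfl⟩, hab⟩ := h.exists_add_eq hJ₁ hJ₂ x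
    exact ⟨a, ha, b, hb, hab.symm⟩
  · obtain ⟨_, ⟨a, ha, rfl⟩, y, ⟨d, hd, hdy⟩, hay⟩ :=
      h.exists_add_eq hJ₁ (Submodule.comap_mulLeft_ne_bot _ hJ₂ (inv_ne_zero hx)) (x - 1)
    obtain ⟨b, hb, hbd⟩ := IsLocalRing.exists_one_add_mul_one_sub_eq_one hA₂1 hd
    simp only [Algebra.linearMap_apply, ValuationSubring.algebraMap_apply,
      LinearMap.mulLeft_apply] at hay hdy
    have hyd : y = x * d := by rw [hdy, mul_inv_cancel_left₀ hx]
    have hbd' : (1 + (b : K)) * (1 - d) = 1 := by exact_mod_cast congrArg Subtype.val hbd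
    refine ⟨a, ha, b, hb, ?_⟩
    linear_combination (-(1 + b)) * hay + (1 + b) * hyd - x * hbd'

theorem independent_valuations_ideal_sum_and_prod
    {K : Type*} [Field K] (O₁ O₂ : ValuationSubring K)
    (h₁ : (O₁ : Set K) ≠ Set.univ) (h₂ : (O₂ : Set K) ≠ Set.univ)
    (hindep : ∀ O : ValuationSubring K, O₁ ≤ O → O₂ ≤ O → (O : Set K) = Set.univ)
    (A₁ : Ideal O₁) (hA₁0 : A₁ ≠ ⊥) (hA₁1 : A₁ ≠ ⊤)
    (A₂ : Ideal O₂) (hA₂0 : A₂ ≠ ⊥) (hA₂1 : A₂ ≠ ⊤) :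
    (∀ x : K, ∃ a ∈ A₁, ∃ b ∈ A₂, x = (a : K) + (b : K)) ∧
    (∀ x : K, x ≠ 0 → ∃ a ∈ A₁, ∃ b ∈ A₂, x = (1 + (a : K)) * (1 + (b : K))) :=
  independent_valuations_ideal_sum_and_prod_general O₁ O₂ hindep A₁ hA₁0 A₂ hA₂0 hA₂1
end

section
/- Let O be a valuation subring of a field K and A an ideal of O. Let x ∈ K be nonzero with x⁻¹ ∉ A. Then for every nonzero a ∈ A one has x ≠ a⁻¹ and (x − a⁻¹)⁻¹ ∈ A. -/
namespace ValuationSubring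

variable {K : Type*} [Field K] (O : ValuationSubring K)

/-- `(y - 1)⁻¹ ∉ O` says that `y - 1` lies in the maximal ideal, so `y` is a unit of `O`. -/
theorem inv_mem_of_inv_sub_one_notMem {y : K} (h : (y - 1)⁻¹ ∉ O) : y⁻¹ ∈ O := by
  have hlt : O.valuation (y - 1) < 1 := by
    rw [← O.valuation_le_one_iff, map_inv₀, not_le] at h
    exact (one_lt_inv₀ (by simpa using h.trans' zero_lt_one)).mp h
  have hy : O.valuation y = 1 := by
    simpa using Valuation.map_one_add_of_lt _ hlt
  rw [← O.valuation_le_one_iff, map_inv₀, hy, inv_one]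

theorem coe_mul_mem_image_ideal {A : Ideal O} {a : O} (ha : a ∈ A) {z : K} (hz : z ∈ O) :
    (a : K) * z ∈ (Subtype.val '' (A : Set O) : Set K) :=
  ⟨a * ⟨z, hz⟩, A.mul_mem_right _ ha, rfl⟩

end ValuationSubring

theorem sub_inv_inv_mem_ideal_general
    {K : Type*} [Field K] (O : ValuationSubring K) (A : Ideal O)
    (x : K) (hxA : x⁻¹ ∉ (Subtype.val '' ((A : Ideal O) : Set O) : Set K)) :
    ∀ a : O, a ∈ A → (a : K) ≠ 0 →
      x ≠ ((a : K))⁻¹ ∧ (x - ((a : K))⁻¹)⁻¹ ∈ (Subtype.val '' ((A : Ideal O) : Set O) : Set K) := by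
  intro a haA ha0
  have hne : x ≠ (a : K)⁻¹ := by
    rintro rfl
    exact hxA ⟨a, haA, (inv_inv _).symm⟩
  -- Otherwise `a * x` would be a unit of `O`, and `x⁻¹ = a * (a * x)⁻¹` would lie in `A`.
  have hinv : ((a : K) * x - 1)⁻¹ ∈ O := by
    by_contra h
    have := ValuationSubring.coe_mul_mem_image_ideal O haA
      (ValuationSubring.inv_mem_of_inv_sub_one_notMem O h)
    rw [mul_inv, ← mul_assoc, mul_inv_cancel₀ ha0, one_mul] at this
    exact hxA this
  refine ⟨hne, ?_⟩
  -- `(x - a⁻¹)⁻¹ = a * (a * x - 1)⁻¹`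
  convert ValuationSubring.coe_mul_mem_image_ideal O haA hinv using 1
  field_simp

theorem sub_inv_inv_mem_ideal
    {K : Type*} [Field K] (O : ValuationSubring K) (A : Ideal O)
    (x : K) (hx : x ≠ 0) (hxA : x⁻¹ ∉ (Subtype.val '' ((A : Ideal O) : Set O) : Set K)) :
    ∀ a : O, a ∈ A → (a : K) ≠ 0 →
      x ≠ ((a : K))⁻¹ ∧ (x - ((a : K))⁻¹)⁻¹ ∈ (Subtype.val '' ((A : Ideal O) : Set O) : Set K) :=
  sub_inv_inv_mem_ideal_general O A x hxA
end

section
/- Let K be a field and |·| an archimedean absolute value on K, i.e., an absolute value such that the set {|n·1| : n ∈ ℕ} is unbounded. Let G be a subgroup of the multiplicative group K^× that is open with respect to the metric topology induced by |·|. Then either G = K^×, or P := G ∪ {0} is an ordering of K, i.e., P + P ⊆ P, P·P ⊆ P, P ∪ (−P) = K and P ∩ (−P) = {0}. -/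
/-!
If `M ⊆ K` is a multiplicative submonoid containing the ball `v (x - 1) < ε`, then `M` contains
the end point of every chain `z₀ ∈ M, z₁, …, zₙ` whose steps are small relative to `v zₖ`; so `M`
is closed under moving along a rational segment `a + s (b - a)` that stays away from `0`,
cut into `n` pieces with `v n` large (this is where `v` archimedean is used).
On `ℚ`, `v` is equivalent to the usual absolute value (Ostrowski). Hence for `a ≠ 0` either the
segment `[1, a]` avoids `0`, or `-a` lies in a disc `v (x - r) < v r` around some rational `r > 0`,
and such discs are reached from `r ∈ M`; thus `a ∈ M` or `-a ∈ M`. If `-1 ∈ M` this gives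
`M = Kˣ`. Otherwise every `c ∈ M` lies in such a disc around some `r`, so `1 + c` lies in the disc
around `1 + r`, whence `M + M ⊆ M` and `M ∪ {0}` is an ordering.
-/

def IsOrderingCone {R : Type*} [Ring R] (P : Set R) : Prop :=
  (∀ x ∈ P, ∀ y ∈ P, x + y ∈ P) ∧ (∀ x ∈ P, ∀ y ∈ P, x * y ∈ P) ∧
    (∀ x, x ∈ P ∨ -x ∈ P) ∧ ∀ x, x ∈ P → -x ∈ P → x = 0

namespace AbsoluteValue

theorem charZero_of_unbounded {R : Type*} [Ring R] [Nontrivial R] {v : AbsoluteValue R ℝ}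
    (harch : ∀ B : ℝ, ∃ n : ℕ, B < v n) : CharZero R := by
  rw [← CharP.ringChar_zero_iff_CharZero]
  by_contra hp
  obtain ⟨n, hn⟩ := harch (ringChar R)
  have hmod : v n ≤ (n % ringChar R : ℕ) := by
    rw [CharP.cast_eq_mod R (ringChar R) n]
    exact v.apply_nat_le_self _
  have hlt : ((n % ringChar R : ℕ) : ℝ) < ringChar R := by
    exact_mod_cast Nat.mod_lt n (Nat.pos_of_ne_zero hp)
  linarith

variable {K : Type*} [Field K] {v : AbsoluteValue K ℝ}

theorem apply_ratCast_le_apply_ratCast_iff (harch : ∀ B : ℝ, ∃ n : ℕ, B < v n) (p q : ℚ) :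
    v p ≤ v q ↔ |p| ≤ |q| := by
  have := charZero_of_unbounded harch
  have hunbdd : ¬ ∀ n : ℕ, v.comp (Rat.castHom K).injective n ≤ 1 := by
    push Not
    obtain ⟨n, hn⟩ := harch 1
    refine ⟨n, ?_⟩
    change 1 < v ((n : ℚ) : K)
    simpa using hn
  have := Rat.AbsoluteValue.equiv_real_of_unbounded hunbdd p q
  change v p ≤ v q ↔ _ at this
  simpa only [Rat.AbsoluteValue.real_eq_abs, ← Rat.cast_abs, Rat.cast_le] using this

variable {M : Submonoid K} {ε : ℝ}

theorem mem_of_chain (hball : ∀ x, v (x - 1) < ε → x ∈ M) {z : ℕ → K} {n : ℕ} (h0 : z 0 ∈ M)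
    (hstep : ∀ k < n, v (z (k + 1) - z k) < ε * v (z k)) : z n ∈ M := by
  induction n with
  | zero => exact h0
  | succ n ih =>
    have hlt := hstep n n.lt_succ_self
    have hzn : z n ≠ 0 := by
      rintro hzn
      rw [hzn, map_zero, mul_zero] at hlt
      exact (v.nonneg _).not_gt hlt
    have hratio : z (n + 1) / z n ∈ M := hball _ <| by
      rwa [div_sub_one hzn, map_div₀, div_lt_iff₀ (v.pos hzn)]
    simpa [div_mul_cancel₀ _ hzn] using M.mul_mem hratio (ih fun k hk => hstep k (by omega))

theorem mem_of_mem_of_segment (harch : ∀ B : ℝ, ∃ n : ℕ, B < v n) (hε : 0 < ε)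
    (hball : ∀ x, v (x - 1) < ε → x ∈ M) {a b : K} (ha : a ∈ M) {δ : ℝ} (hδ : 0 < δ)
    (hseg : ∀ s : ℚ, 0 ≤ s → s ≤ 1 → δ ≤ v (a + s * (b - a))) : b ∈ M := by
  have := charZero_of_unbounded harch
  obtain ⟨n, hn⟩ := harch (v (b - a) / (δ * ε))
  have hvn : 0 < v (n : K) := (div_nonneg (v.nonneg _) (by positivity)).trans_lt hn
  have hnK : (n : K) ≠ 0 := v.pos_iff.1 hvn
  set z : ℕ → K := fun k => a + ((k / n : ℚ) : K) * (b - a)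
  have hzn : z n = b := by simp [z, hnK]
  rw [← hzn]
  refine mem_of_chain hball (by simpa [z] using ha) fun k hk => ?_
  have hdiff : z (k + 1) - z k = (b - a) / n := by
    simp only [z]
    push_cast
    field_simp
    ring
  have hs1 : (k / n : ℚ) ≤ 1 := div_le_one_of_le₀ (by exact_mod_cast hk.le) (by positivity)
  calc v (z (k + 1) - z k) = v (b - a) / v n := by rw [hdiff, map_div₀]
    _ < δ * ε := by rwa [div_lt_iff₀ hvn, mul_comm, ← div_lt_iff₀ (by positivity)]
    _ ≤ ε * v (z k) := by
      rw [mul_comm]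
      exact mul_le_mul_of_nonneg_left (hseg _ (by positivity) hs1) hε.le

theorem mem_of_forall_le_apply_add (harch : ∀ B : ℝ, ∃ n : ℕ, B < v n) (hε : 0 < ε)
    (hball : ∀ x, v (x - 1) < ε → x ∈ M) {a : K} (ha : a ≠ 0)
    (h : ∀ r : ℚ, 0 < r → v r ≤ v (a + r)) : a ∈ M := by
  have := charZero_of_unbounded harch
  -- `z = 1 + s (a - 1)` equals both `s (a + (1 - s) / s)` and `a - (1 - s) (a - 1)`, giving the
  -- lower bounds `v (1 - s)` and `v a - v (1 - s) v (a - 1)`; together `v a ≤ (1 + v (a - 1)) v z`.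
  refine mem_of_mem_of_segment harch hε hball M.one_mem (δ := v a / (1 + v (a - 1)))
    (by have := v.pos ha; positivity) fun s hs0 hs1 => ?_
  have hfar : v ((1 - s : ℚ) : K) ≤ v (1 + s * (a - 1)) := by
    rcases hs0.eq_or_lt with rfl | hs0
    · simp
    rcases hs1.eq_or_lt with rfl | hs1
    · simp
    calc v ((1 - s : ℚ) : K) = v (s : K) * v (((1 - s) / s : ℚ) : K) := by
          rw [← map_mul, ← Rat.cast_mul, mul_div_cancel₀ _ hs0.ne']
      _ ≤ v (s : K) * v (a + ((1 - s) / s : ℚ)) :=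
          mul_le_mul_of_nonneg_left (h _ (div_pos (sub_pos.2 hs1) hs0)) (v.nonneg _)
      _ = v (1 + s * (a - 1)) := by
          have : (s : K) ≠ 0 := by exact_mod_cast hs0.ne'
          rw [← map_mul]
          congr 1
          push_cast
          field_simp
          ring
  have hnear : v a - v ((1 - s : ℚ) : K) * v (a - 1) ≤ v (1 + s * (a - 1)) := by
    have hz : 1 + s * (a - 1) = a - ((1 - s : ℚ) : K) * (a - 1) := by push_cast; ring
    rw [hz, ← map_mul]
    exact v.le_sub _ _
  rw [div_le_iff₀ (by positivity)]
  nlinarith [mul_le_mul_of_nonneg_right hfar (v.nonneg (a - 1))]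

theorem ratCast_mem (harch : ∀ B : ℝ, ∃ n : ℕ, B < v n) (hε : 0 < ε)
    (hball : ∀ x, v (x - 1) < ε → x ∈ M) {q : ℚ} (hq : 0 < q) : (q : K) ∈ M := by
  have := charZero_of_unbounded harch
  refine mem_of_forall_le_apply_add harch hε hball (Rat.cast_ne_zero.2 hq.ne') fun r hr => ?_
  rw [← Rat.cast_add, apply_ratCast_le_apply_ratCast_iff harch, abs_of_pos hr,
    abs_of_pos (by positivity)]
  linarith

theorem mem_of_apply_sub_ratCast_lt (harch : ∀ B : ℝ, ∃ n : ℕ, B < v n) (hε : 0 < ε)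
    (hball : ∀ x, v (x - 1) < ε → x ∈ M) {a : K} {r : ℚ} (hr : 0 < r) (h : v (a - r) < v r) :
    a ∈ M := by
  refine mem_of_mem_of_segment harch hε hball (ratCast_mem harch hε hball hr) (sub_pos.2 h)
    fun s hs0 hs1 => ?_
  have hvs : v (s : K) ≤ 1 := by
    simpa using (apply_ratCast_le_apply_ratCast_iff harch s 1).2
      (by rwa [abs_of_nonneg hs0, abs_one])
  calc v r - v (a - r) ≤ v r - v (s : K) * v (a - r) := by nlinarith [v.nonneg (a - r)]
    _ ≤ v (r + s * (a - r)) := by simpa only [map_mul] using v.le_add (r : K) (s * (a - r))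

theorem mem_or_neg_mem (harch : ∀ B : ℝ, ∃ n : ℕ, B < v n) (hε : 0 < ε)
    (hball : ∀ x, v (x - 1) < ε → x ∈ M) {a : K} (ha : a ≠ 0) : a ∈ M ∨ -a ∈ M := by
  by_cases h : ∀ r : ℚ, 0 < r → v r ≤ v (a + r)
  · exact .inl (mem_of_forall_le_apply_add harch hε hball ha h)
  · push Not at h
    obtain ⟨r, hr, hlt⟩ := h
    refine .inr (mem_of_apply_sub_ratCast_lt harch hε hball hr ?_)
    rwa [← neg_add', v.map_neg]

theorem mem_of_neg_one_mem (harch : ∀ B : ℝ, ∃ n : ℕ, B < v n) (hε : 0 < ε)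
    (hball : ∀ x, v (x - 1) < ε → x ∈ M) (hneg : (-1 : K) ∈ M) {a : K} (ha : a ≠ 0) : a ∈ M := by
  refine (mem_or_neg_mem harch hε hball ha).elim id fun h => ?_
  simpa using M.mul_mem hneg h

theorem neg_one_mem_of_mem_of_neg_mem (hinv : ∀ x ∈ M, x⁻¹ ∈ M) {a : K} (ha : a ≠ 0) (h : a ∈ M)
    (hneg : -a ∈ M) : (-1 : K) ∈ M := by
  simpa [ha] using M.mul_mem hneg (hinv a h)

theorem exists_apply_sub_ratCast_lt (harch : ∀ B : ℝ, ∃ n : ℕ, B < v n) (hε : 0 < ε)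
    (hball : ∀ x, v (x - 1) < ε → x ∈ M) (hinv : ∀ x ∈ M, x⁻¹ ∈ M) (hneg : (-1 : K) ∉ M)
    {b : K} (hb0 : b ≠ 0) (hb : b ∈ M) : ∃ r : ℚ, 0 < r ∧ v (b - r) < v r := by
  by_contra! h
  refine hneg (neg_one_mem_of_mem_of_neg_mem hinv hb0 hb ?_)
  refine mem_of_forall_le_apply_add harch hε hball (neg_ne_zero.2 hb0) fun r hr => ?_
  rw [neg_add_eq_sub, v.map_sub]
  exact h r hr

theorem add_mem_of_neg_one_notMem (harch : ∀ B : ℝ, ∃ n : ℕ, B < v n) (hε : 0 < ε)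
    (hball : ∀ x, v (x - 1) < ε → x ∈ M) (hinv : ∀ x ∈ M, x⁻¹ ∈ M) (hneg : (-1 : K) ∉ M)
    {x y : K} (hx : x ∈ M) (hy : y ∈ M) : x + y ∈ M := by
  have := charZero_of_unbounded harch
  rcases eq_or_ne x 0 with rfl | hx0
  · simpa using hy
  rcases eq_or_ne y 0 with rfl | hy0
  · simpa using hx
  obtain ⟨r, hr, hlt⟩ := exists_apply_sub_ratCast_lt harch hε hball hinv hneg
    (div_ne_zero hy0 hx0) (by rw [div_eq_mul_inv]; exact M.mul_mem hy (hinv x hx))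
  have hone_add : 1 + y / x ∈ M := by
    refine mem_of_apply_sub_ratCast_lt harch hε hball (r := 1 + r) (by positivity) ?_
    have hle : v r ≤ v ((1 + r : ℚ) : K) := by
      rw [apply_ratCast_le_apply_ratCast_iff harch, abs_of_pos hr, abs_of_pos (by positivity)]
      linarith
    rw [show 1 + y / x - ((1 + r : ℚ) : K) = y / x - r by push_cast; ring]
    exact hlt.trans_le hle
  simpa [mul_add, mul_div_cancel₀ _ hx0] using M.mul_mem hx hone_add

theorem isOrderingCone_setOf_mem_or_eq_zero (harch : ∀ B : ℝ, ∃ n : ℕ, B < v n) (hε : 0 < ε)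
    (hball : ∀ x, v (x - 1) < ε → x ∈ M) (hinv : ∀ x ∈ M, x⁻¹ ∈ M) (hneg : (-1 : K) ∉ M) :
    IsOrderingCone {x : K | x ∈ M ∨ x = 0} := by
  refine ⟨?_, ?_, fun x => ?_, ?_⟩
  · rintro x (hx | rfl) y (hy | rfl)
    · exact .inl (add_mem_of_neg_one_notMem harch hε hball hinv hneg hx hy)
    all_goals simp_all
  · rintro x (hx | rfl) y (hy | rfl)
    · exact .inl (M.mul_mem hx hy)
    all_goals simp
  · rcases eq_or_ne x 0 with rfl | hx
    · exact .inl (.inr rfl)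
    · exact (mem_or_neg_mem harch hε hball hx).imp .inl .inl
  · rintro x (hx | rfl) (hnx | hnx)
    · by_contra hx0
      exact hneg (neg_one_mem_of_mem_of_neg_mem hinv hx0 hx hnx)
    · exact neg_eq_zero.1 hnx
    all_goals rfl

end AbsoluteValue

theorem open_mulSubgroup_eq_top_or_ordering_of_archimedean_absoluteValue
    {K : Type*} [Field K] (v : AbsoluteValue K ℝ)
    (harch : ∀ B : ℝ, ∃ n : ℕ, B < v (n : K))
    (G : Subgroup Kˣ)
    (hopen : ∀ g ∈ G, ∃ ε : ℝ, 0 < ε ∧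
      ∀ x : K, v (x - (g : K)) < ε → ∃ u ∈ G, (u : K) = x) :
    G = ⊤ ∨
      ((∀ x ∈ {x : K | (∃ u ∈ G, (u : K) = x) ∨ x = 0},
          ∀ y ∈ {x : K | (∃ u ∈ G, (u : K) = x) ∨ x = 0},
            x + y ∈ {x : K | (∃ u ∈ G, (u : K) = x) ∨ x = 0}) ∧
       (∀ x ∈ {x : K | (∃ u ∈ G, (u : K) = x) ∨ x = 0},
          ∀ y ∈ {x : K | (∃ u ∈ G, (u : K) = x) ∨ x = 0},
            x * y ∈ {x : K | (∃ u ∈ G, (u : K) = x) ∨ x = 0}) ∧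
       (∀ x : K, x ∈ {x : K | (∃ u ∈ G, (u : K) = x) ∨ x = 0} ∨
          -x ∈ {x : K | (∃ u ∈ G, (u : K) = x) ∨ x = 0}) ∧
       (∀ x : K, x ∈ {x : K | (∃ u ∈ G, (u : K) = x) ∨ x = 0} →
          -x ∈ {x : K | (∃ u ∈ G, (u : K) = x) ∨ x = 0} → x = 0)) := by
  set M : Submonoid K := G.toSubmonoid.map (Units.coeHom K)
  have hM : ∀ x, x ∈ M ↔ ∃ u ∈ G, (u : K) = x := fun x => Submonoid.mem_map
  obtain ⟨ε, hε, hball⟩ := hopen 1 G.one_mem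
  have hballM : ∀ x, v (x - 1) < ε → x ∈ M := fun x hx => (hM x).2 (hball x (by simpa using hx))
  by_cases hneg : (-1 : K) ∈ M
  · refine .inl (eq_top_iff.2 fun u _ => ?_)
    obtain ⟨w, hw, hwu⟩ := (hM u).1 (v.mem_of_neg_one_mem harch hε hballM hneg u.ne_zero)
    rwa [← Units.ext hwu]
  · have hinv : ∀ x ∈ M, x⁻¹ ∈ M := by
      simp only [hM]
      rintro _ ⟨u, hu, rfl⟩
      exact ⟨u⁻¹, G.inv_mem hu, by simp⟩
    have hP : {x : K | (∃ u ∈ G, (u : K) = x) ∨ x = 0} = {x | x ∈ M ∨ x = 0} := by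
      simp only [hM]
    rw [hP]
    exact .inr (v.isOrderingCone_setOf_mem_or_eq_zero harch hε hballM hinv hneg)
end

section
/- Let K be a field and G a subgroup of the multiplicative group K^×. Then any two valuation subrings of K that are coarsely compatible with G are comparable: if O₁ and O₂ are both coarsely compatible with G, then O₁ ⊆ O₂ or O₂ ⊆ O₁. -/
/-- `O` is weakly compatible with the multiplicative subgroup `G ≤ Kˣ` if there is an ideal
`A` of `O` with radical the maximal ideal and `1 + A ⊆ G`. -/
def WeaklyCompatible {K : Type*} [Field K] (O : ValuationSubring K) (G : Subgroup Kˣ) : Prop :=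
  ∃ A : Ideal O, A.radical = IsLocalRing.maximalIdeal O ∧ ∀ a ∈ A, ∃ u ∈ G, (u : K) = 1 + (a : K)

/-- `O` is coarsely compatible with `G` if it is weakly compatible with `G` and no valuation
subring properly containing `O` has its unit group contained in `G`. -/
def CoarselyCompatible {K : Type*} [Field K] (O : ValuationSubring K) (G : Subgroup Kˣ) : Prop :=
  WeaklyCompatible O G ∧ ∀ O' : ValuationSubring K, O < O' → ¬ (O'.unitGroup ≤ G)

/-!
If `O₁` and `O₂` are incomparable, every `x ∈ O₁ ⊔ O₂` satisfies `x s ∈ O₁` for some `s` with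
`v₁ s < 1 = v₂ s`, and symmetrically. For a unit `u` of `O₁ ⊔ O₂` this gives such an `s` with
`(u - 1) s ∈ O₁` and a `t` with `v₂ t < 1 = v₁ t` and `(u⁻¹ - 1) t ∈ O₂`; as `√A₁ = M₁` and
`√A₂ = M₂`, some `s ^ k` lies in `A₁` and some `t ^ l` in `A₂`. Now `D = s ^ (k + 1) + t ^ (l + 1)`
is a unit of both rings, and `e₁ = s ^ (k + 1) / D`, `e₂ = t ^ (l + 1) / D` satisfy `e₁ + e₂ = 1`,
whence `u = (1 + (u - 1) e₁) / (1 + (u⁻¹ - 1) e₂) ∈ (1 + A₁) (1 + A₂)⁻¹ ⊆ G`. So the units of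
`O₁ ⊔ O₂ > O₁` lie in `G`, contradicting the coarse compatibility of `O₁`.
-/

namespace ValuationSubring

variable {K : Type*} [Field K]

/-- The fractions `x / s` with `x ∈ O` and `s ∈ O` a unit of `O'`. -/
def localizationAtUnitsOf (O O' : ValuationSubring K) : Subring K where
  carrier := {x | ∃ s ∈ O, O'.valuation s = 1 ∧ x * s ∈ O}
  one_mem' := ⟨1, O.one_mem, map_one _, by simp⟩
  zero_mem' := ⟨1, O.one_mem, map_one _, by simp⟩
  mul_mem' := by
    rintro x y ⟨s, hs, hs', hxs⟩ ⟨t, ht, ht', hyt⟩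
    refine ⟨s * t, O.mul_mem _ _ hs ht, by rw [map_mul, hs', ht', one_mul], ?_⟩
    rw [mul_mul_mul_comm]
    exact O.mul_mem _ _ hxs hyt
  add_mem' := by
    rintro x y ⟨s, hs, hs', hxs⟩ ⟨t, ht, ht', hyt⟩
    refine ⟨s * t, O.mul_mem _ _ hs ht, by rw [map_mul, hs', ht', one_mul], ?_⟩
    rw [show (x + y) * (s * t) = x * s * t + y * t * s by ring]
    exact O.add_mem _ _ (O.mul_mem _ _ hxs ht) (O.mul_mem _ _ hyt hs)
  neg_mem' := by
    rintro x ⟨s, hs, hs', hxs⟩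
    exact ⟨s, hs, hs', by simpa using O.neg_mem _ hxs⟩

theorem toSubring_le_localizationAtUnitsOf_left (O O' : ValuationSubring K) :
    O.toSubring ≤ O.localizationAtUnitsOf O' :=
  fun x hx ↦ ⟨1, O.one_mem, map_one _, by simpa using hx⟩

theorem exists_valuation_lt_one_mul_mem {O O' : ValuationSubring K} {x : K}
    (hx' : x ∈ O') (hx : x ∉ O) :
    ∃ s, O'.valuation s = 1 ∧ O.valuation s < 1 ∧ x * s ∈ O := by
  have hvx : 1 < O.valuation x := not_le.1 (mt (O.valuation_le_one_iff x).1 hx)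
  rcases ((O'.valuation_le_one_iff x).2 hx').lt_or_eq with hlt | heq
  · have h1x' : O'.valuation (1 + x) = 1 := by
      rw [Valuation.map_add_eq_of_lt_left _ (by simpa using hlt), map_one]
    have h1x : O.valuation (1 + x) = O.valuation x :=
      Valuation.map_add_eq_of_lt_right _ (by simpa using hvx)
    have hne : 1 + x ≠ 0 := by
      rintro h; simp [h] at h1x'
    refine ⟨(1 + x)⁻¹, by simp [h1x'], by simpa [h1x] using inv_lt_one_of_one_lt₀ hvx, ?_⟩
    rw [show x * (1 + x)⁻¹ = 1 - (1 + x)⁻¹ by field_simp; ring]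
    refine sub_mem O.one_mem (O.mem_of_valuation_le_one _ ?_)
    simpa [h1x] using (inv_lt_one_of_one_lt₀ hvx).le
  · have hne : x ≠ 0 := by
      rintro rfl; simp at hvx
    exact ⟨x⁻¹, by simp [heq], by simpa using inv_lt_one_of_one_lt₀ hvx,
      by rw [mul_inv_cancel₀ hne]; exact O.one_mem⟩

theorem toSubring_le_localizationAtUnitsOf_right (O O' : ValuationSubring K) :
    O'.toSubring ≤ O.localizationAtUnitsOf O' := by
  intro x hx'
  by_cases hx : x ∈ O
  · exact O.toSubring_le_localizationAtUnitsOf_left O' hx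
  obtain ⟨s, hs', hs, hxs⟩ := exists_valuation_lt_one_mul_mem hx' hx
  exact ⟨s, O.mem_of_valuation_le_one _ hs.le, hs', hxs⟩

theorem exists_valuation_lt_one_mul_mem_of_mem_sup {O O' : ValuationSubring K} {x : K}
    (h : ¬O' ≤ O) (hx : x ∈ O ⊔ O') :
    ∃ s, O'.valuation s = 1 ∧ O.valuation s < 1 ∧ x * s ∈ O := by
  obtain ⟨s₁, hs₁, hs₁', hxs₁⟩ : x ∈ O.localizationAtUnitsOf O' :=
    sup_le (O.toSubring_le_localizationAtUnitsOf_left O')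
      (O.toSubring_le_localizationAtUnitsOf_right O') hx
  obtain ⟨b, hb', hb⟩ := SetLike.not_le_iff_exists.mp h
  obtain ⟨s₀, hs₀', hs₀, -⟩ := exists_valuation_lt_one_mul_mem hb' hb
  refine ⟨s₀ * s₁, by rw [map_mul, hs₀', hs₁', one_mul], ?_, ?_⟩
  · rw [map_mul]
    exact mul_lt_one_of_lt_of_le hs₀ ((O.valuation_le_one_iff _).2 hs₁)
  · rw [mul_left_comm]
    exact O.mul_mem _ _ (O.mem_of_valuation_le_one _ hs₀.le) hxs₁

theorem div_mem_of_valuation_eq_one {O : ValuationSubring K} {x d : K} (hx : x ∈ O)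
    (hd : O.valuation d = 1) : x / d ∈ O := by
  rw [← valuation_le_one_iff, map_div₀, hd, div_one, valuation_le_one_iff]
  exact hx

end ValuationSubring

section Compatible

open ValuationSubring

variable {K : Type*} [Field K] {G : Subgroup Kˣ}

theorem WeaklyCompatible.exists_pow_mul_mem {O : ValuationSubring K} (hO : WeaklyCompatible O G)
    {s : K} (hs : O.valuation s < 1) :
    ∃ k : ℕ, ∀ a ∈ O, ∃ g ∈ G, (g : K) = 1 + s ^ k * a := by
  obtain ⟨A, hA, hAG⟩ := hO
  have hsO : s ∈ O := O.mem_of_valuation_le_one _ hs.le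
  have hsA : (⟨s, hsO⟩ : O) ∈ A.radical := by
    rw [hA, valuation_lt_one_iff]
    exact hs
  obtain ⟨k, hk⟩ := Ideal.mem_radical_iff.mp hsA
  refine ⟨k, fun a ha ↦ ?_⟩
  simpa using hAG _ (A.mul_mem_right ⟨a, ha⟩ hk)

theorem unitGroup_sup_le_of_weaklyCompatible {O₁ O₂ : ValuationSubring K}
    (h₁₂ : ¬O₁ ≤ O₂) (h₂₁ : ¬O₂ ≤ O₁)
    (hw₁ : WeaklyCompatible O₁ G) (hw₂ : WeaklyCompatible O₂ G) :
    (O₁ ⊔ O₂).unitGroup ≤ G := by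
  intro u hu
  rw [mem_unitGroup_iff] at hu
  have hu₁₂ : (u : K) ∈ O₁ ⊔ O₂ := mem_of_valuation_le_one _ _ hu.le
  have hu₂₁ : (u : K)⁻¹ ∈ O₂ ⊔ O₁ := by
    rw [sup_comm]
    exact mem_of_valuation_le_one _ _ (by simp [hu])
  obtain ⟨s, hs₂, hs₁, hus⟩ :=
    exists_valuation_lt_one_mul_mem_of_mem_sup h₂₁ (sub_mem hu₁₂ (O₁ ⊔ O₂).one_mem)
  obtain ⟨t, ht₁, ht₂, hut⟩ :=
    exists_valuation_lt_one_mul_mem_of_mem_sup h₁₂ (sub_mem hu₂₁ (O₂ ⊔ O₁).one_mem)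
  obtain ⟨k, hk⟩ := hw₁.exists_pow_mul_mem hs₁
  obtain ⟨l, hl⟩ := hw₂.exists_pow_mul_mem ht₂
  set D := s ^ (k + 1) + t ^ (l + 1)
  have hD₁ : O₁.valuation D = 1 := by
    rw [Valuation.map_add_eq_of_lt_right] <;> simp [ht₁, pow_lt_one₀, hs₁]
  have hD₂ : O₂.valuation D = 1 := by
    rw [Valuation.map_add_eq_of_lt_left] <;> simp [hs₂, pow_lt_one₀, ht₂]
  have hD : D ≠ 0 := by
    rintro h; simp [h] at hD₁
  obtain ⟨g₁, hg₁, hg₁_eq⟩ := hk _ (div_mem_of_valuation_eq_one hus hD₁)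
  obtain ⟨g₂, hg₂, hg₂_eq⟩ := hl _ (div_mem_of_valuation_eq_one hut hD₂)
  have hu_eq : u = g₁ * g₂⁻¹ := by
    rw [eq_mul_inv_iff_mul_eq]
    ext
    rw [Units.val_mul, hg₁_eq, hg₂_eq]
    field_simp
    ring
  rw [hu_eq]
  exact mul_mem hg₁ (inv_mem hg₂)

end Compatible

theorem coarselyCompatible_comparable
    {K : Type*} [Field K] (G : Subgroup Kˣ) (O₁ O₂ : ValuationSubring K)
    (h₁ : CoarselyCompatible O₁ G) (h₂ : CoarselyCompatible O₂ G) :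
    O₁ ≤ O₂ ∨ O₂ ≤ O₁ := by
  by_contra! h
  exact h₁.2 (O₁ ⊔ O₂) (left_lt_sup.2 h.2)
    (unitGroup_sup_le_of_weaklyCompatible h.1 h.2 h₁.1 h₂.1)
end

section
/- Let K be a field of characteristic p > 0 and O a valuation subring of K with maximal ideal M. Let G be an additive subgroup of K containing the Artin–Schreier group K^(p) = {x^p − x : x ∈ K}. Then O is compatible with G (i.e., M ⊆ G) if and only if O is weakly compatible with G (i.e., there is an ideal A of O with radical √A = M and A ⊆ G). -/
/-!
Telescoping `x ^ p ^ (k+1) - x = (x ^ p ^ k) ^ p - x ^ p ^ k + (x ^ p ^ k - x)` shows that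
`x ^ p ^ k ≡ x` modulo `G` for every `k`. If `m ^ n ∈ A ⊆ G`, then also `m ^ p ^ n ∈ A`
because `n ≤ p ^ n`, hence `m ∈ G`: so `√A ⊆ G`, and `√A = M` gives `M ⊆ G`.
-/

namespace AddSubgroup

variable {R : Type*} [Ring R] (G : AddSubgroup R) {p : ℕ}

theorem pow_pow_sub_mem (hG : ∀ x : R, x ^ p - x ∈ G) (x : R) (k : ℕ) :
    x ^ p ^ k - x ∈ G := by
  induction k with
  | zero => simp
  | succ k ih =>
    have h : x ^ p ^ (k + 1) - x = ((x ^ p ^ k) ^ p - x ^ p ^ k) + (x ^ p ^ k - x) := by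
      rw [← pow_mul, ← pow_succ]; abel
    exact h ▸ G.add_mem (hG _) ih

theorem mem_of_pow_pow_mem (hG : ∀ x : R, x ^ p - x ∈ G) {x : R} {k : ℕ}
    (hx : x ^ p ^ k ∈ G) : x ∈ G := by
  simpa using G.sub_mem hx (G.pow_pow_sub_mem hG x k)

end AddSubgroup

theorem Ideal.radical_subset_of_forall_pow_sub_mem {R : Type*} [CommRing R] {p : ℕ}
    (hp : p ≠ 1) (G : AddSubgroup R) (hG : ∀ x : R, x ^ p - x ∈ G) {I : Ideal R}
    (hI : (I : Set R) ⊆ G) : (I.radical : Set R) ⊆ G := by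
  rintro x ⟨n, hn⟩
  obtain rfl | hp1 : p = 0 ∨ 1 < p := by omega
  · -- `x ^ 0 ^ 1 = 1 = 0 ^ 0 - 0`
    exact G.mem_of_pow_pow_mem hG (k := 1) (by simpa using hG 0)
  · exact G.mem_of_pow_pow_mem hG
      (hI (I.pow_mem_of_pow_mem hn (Nat.lt_pow_self hp1).le))

theorem compatible_iff_weakly_compatible_of_artinSchreier_subset_general
    {K : Type*} [Field K] (p : ℕ) [CharP K p]
    (O : ValuationSubring K) (G : AddSubgroup K)
    (hAS : ∀ x : K, x ^ p - x ∈ G) :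
    (∀ m : O, m ∈ IsLocalRing.maximalIdeal O → (m : K) ∈ G) ↔
      ∃ A : Ideal O, A.radical = IsLocalRing.maximalIdeal O ∧ ∀ a ∈ A, (a : K) ∈ G := by
  constructor
  · exact fun h ↦ ⟨_, (IsLocalRing.maximalIdeal.isMaximal O).isPrime.radical, h⟩
  · rintro ⟨A, hrad, hA⟩ m hm
    let G' : AddSubgroup O := G.comap O.subtype.toAddMonoidHom
    have hG' : ∀ x : O, x ^ p - x ∈ G' := fun x ↦ by simpa [G'] using hAS x
    exact Ideal.radical_subset_of_forall_pow_sub_mem (CharP.char_ne_one K p) G' hG' hA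
      (hrad ▸ hm)

theorem compatible_iff_weakly_compatible_of_artinSchreier_subset
    {K : Type*} [Field K] (p : ℕ) [CharP K p] (hp : 0 < p)
    (O : ValuationSubring K) (G : AddSubgroup K)
    (hAS : ∀ x : K, x ^ p - x ∈ G) :
    (∀ m : O, m ∈ IsLocalRing.maximalIdeal O → (m : K) ∈ G) ↔
      ∃ A : Ideal O, A.radical = IsLocalRing.maximalIdeal O ∧ ∀ a ∈ A, (a : K) ∈ G :=
  compatible_iff_weakly_compatible_of_artinSchreier_subset_general p O G hAS
end

section
/- Let K be a field, O a valuation subring of K with maximal ideal M, and G a subgroup of the multiplicative group K^×. Suppose there is a positive integer n with (K^×)^n ⊆ G, and that either the residue field O/M has characteristic 0 or n is coprime to the characteristic of O/M. Then O is compatible with G (i.e., 1 + M ⊆ G) if and only if O is weakly compatible with G (i.e., there is an ideal A of O with radical √A = M and 1 + A ⊆ G). -/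
/-!
If `n` is invertible, every `1 + m` with `m` in the Jacobson radical is an `n`-th power times
`1 + w` with `w ∈ m² R`: take the `n`-th power of `1 + m / n`. As `mᵏ ∈ A` gives `wᵏ⁻¹ ∈ A`,
strong induction on `k` reduces `1 + m ∈ G` to `1 + A ⊆ G`, the `n`-th powers lying in `G`.
The hypothesis on the residue characteristic (with `n > 0`) makes `n` a unit of `O`.
-/

section OneAddMemUnits

variable {R S : Type*} [CommRing R] [Semiring S]

theorem exists_units_pow_mul_one_add_sq_mul_eq_one_add {n : ℕ} (hn : IsUnit (n : R)) {m : R}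
    (hm : m ∈ Ideal.jacobson (⊥ : Ideal R)) :
    ∃ (v : Rˣ) (t : R), (v : R) ^ n * (1 + m ^ 2 * t) = 1 + m := by
  obtain ⟨c, hc⟩ := hn.exists_right_inv
  obtain ⟨v, hv⟩ := Ideal.mem_jacobson_bot.mp hm c
  obtain ⟨s, hs⟩ := sq_dvd_add_pow_sub_sub (c * m) 1 n
  have hvv : ((v : R) * ↑v⁻¹) ^ n = 1 := by rw [Units.mul_inv, one_pow]
  refine ⟨v, -(c ^ 2 * s * (↑v⁻¹ : R) ^ n), ?_⟩
  have hvn : (v : R) ^ n = (1 + c * m) ^ n := by rw [hv, add_comm, mul_comm]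
  simp only [one_pow, one_mul] at hs
  linear_combination hvn + hs - m ^ 2 * c ^ 2 * s * hvv + m * hc

theorem exists_mem_val_eq_one_add_of_mem_radical {n : ℕ} (hn : IsUnit (n : R)) (f : R →+* S)
    {G : Subgroup Sˣ} (hpow : ∀ x : Sˣ, x ^ n ∈ G) {A : Ideal R}
    (hA : ∀ a ∈ A, ∃ u ∈ G, (u : S) = 1 + f a) {m : R} (hm : m ∈ Ideal.jacobson (⊥ : Ideal R))
    (hmA : m ∈ A.radical) : ∃ u ∈ G, (u : S) = 1 + f m := by
  obtain ⟨k, hk⟩ := hmA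
  induction k using Nat.strong_induction_on generalizing m with
  | _ k ih =>
    rcases k with _ | _ | j
    · rw [pow_zero, ← Ideal.eq_top_iff_one] at hk
      exact hA m (hk ▸ Submodule.mem_top)
    · exact hA m (pow_one m ▸ hk)
    · obtain ⟨v, t, hvt⟩ := exists_units_pow_mul_one_add_sq_mul_eq_one_add hn hm
      have hw : m ^ 2 * t ∈ Ideal.jacobson (⊥ : Ideal R) :=
        Ideal.mul_mem_right _ _ (Ideal.pow_mem_of_mem _ hm 2 two_pos)
      have hwA : (m ^ 2 * t) ^ (j + 1) ∈ A := by
        have : (m ^ 2 * t) ^ (j + 1) = m ^ (j + 2) * (m ^ j * t ^ (j + 1)) := by ring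
        exact this ▸ A.mul_mem_right _ hk
      obtain ⟨u, huG, hu⟩ := ih (j + 1) (by omega) hw hwA
      refine ⟨Units.map f v ^ n * u, mul_mem (hpow _) huG, ?_⟩
      have hfvt := congrArg f hvt
      simp only [map_mul, map_pow, map_add, map_one] at hfvt
      simpa [hu] using hfvt

end OneAddMemUnits

theorem natCast_ne_zero_of_coprime_ringChar {F : Type*} [NonAssocSemiring F] [Nontrivial F]
    {n : ℕ} (hn : n ≠ 0) (hchar : ringChar F = 0 ∨ n.Coprime (ringChar F)) : (n : F) ≠ 0 := by
  rw [Ne, ringChar.spec]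
  intro hdvd
  rcases hchar with hzero | hcop
  · exact hn (Nat.eq_zero_of_zero_dvd (hzero ▸ hdvd))
  · exact CharP.ringChar_ne_one (Nat.eq_one_of_dvd_coprimes hcop hdvd dvd_rfl)

theorem compatible_iff_weakly_compatible_of_pow_subset
    {K : Type*} [Field K] (O : ValuationSubring K) (G : Subgroup Kˣ)
    (n : ℕ) (hn : 0 < n) (hpow : ∀ x : Kˣ, x ^ n ∈ G)
    (hchar : ∀ q : ℕ, CharP (IsLocalRing.ResidueField O) q → (q = 0 ∨ Nat.Coprime n q)) :
    (∀ m : O, m ∈ IsLocalRing.maximalIdeal O → ∃ u ∈ G, (u : K) = 1 + (m : K)) ↔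
      ∃ A : Ideal O, A.radical = IsLocalRing.maximalIdeal O ∧
        ∀ a ∈ A, ∃ u ∈ G, (u : K) = 1 + (a : K) := by
  constructor
  · intro h
    exact ⟨_, (IsLocalRing.maximalIdeal.isMaximal O).isPrime.radical, h⟩
  · rintro ⟨A, hrad, hA⟩ m hm
    have hnO : IsUnit (n : O) := (IsLocalRing.residue_ne_zero_iff_isUnit _).mp <| by
      rw [map_natCast]
      exact natCast_ne_zero_of_coprime_ringChar hn.ne' (hchar _ (ringChar.charP _))
    exact exists_mem_val_eq_one_add_of_mem_radical hnO O.subtype hpow hA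
      (IsLocalRing.maximalIdeal_le_jacobson _ hm) (hrad ▸ hm)
end
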